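/- arXiv:2506.18643 — 2 statements merged into one kernel-verified Lean document; each statement's English description precedes it below -/
import Mathlib

section
/- If each voter pays at most (ℓ−1)·(k+1)/(nℓ) + 1/q for some q > nℓ/(k+1), where ℓ ≤ k, then each voter's total payment is strictly less than (k+1)/n; hence if every selected candidate costs 1 and is fully paid by voters, the total number of selected candidates is at most k. -/
/-- The price-system bound: if each voter pays at most
`(ℓ−1)·(k+1)/(n·ℓ) + 1/q` for some `q > n·ℓ/(k+1)`, where `ℓ ≤ k`, then each
voter's total payment is strictly less than `(k+1)/n`; hence if each of `s`
selected candidates costs `1` and is fully paid by the `n` voters, then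
`s ≤ k`. -/
theorem stmt_7 (n k ℓ : ℕ) (q : ℝ)
    (hn : 0 < n) (hk : 0 < k) (hℓ : 0 < ℓ) (hℓk : ℓ ≤ k)
    (hq : (n : ℝ) * ℓ / (k + 1) < q)
    {V : Type*} [Fintype V] (hV : Fintype.card V = n)
    (p : V → ℝ)
    (hp : ∀ v, p v ≤ ((ℓ : ℝ) - 1) * (k + 1) / (n * ℓ) + 1 / q)
    (s : ℕ) (hs : (s : ℝ) ≤ ∑ v, p v) :
    (∀ v, p v < ((k : ℝ) + 1) / n) ∧ s ≤ k := by
  have hnR : (0 : ℝ) < n := by exact_mod_cast hn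
  have hℓR : (0 : ℝ) < ℓ := by exact_mod_cast hℓ
  have hkR : (0 : ℝ) < (k : ℝ) + 1 := by positivity
  have hnl : (0 : ℝ) < (n : ℝ) * ℓ := by positivity
  have h0q : (0 : ℝ) < (n : ℝ) * ℓ / (k + 1) := by positivity
  have hqpos : (0 : ℝ) < q := h0q.trans hq
  have h1q : 1 / q < (k + 1) / ((n : ℝ) * ℓ) := by
    rw [div_lt_div_iff₀ hqpos hnl]
    have := (div_lt_iff₀ hkR).mp hq
    nlinarith
  have key : ∀ v, p v < ((k : ℝ) + 1) / n := by
    intro v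
    have h := hp v
    have : ((ℓ : ℝ) - 1) * (k + 1) / (n * ℓ) + (k + 1) / ((n : ℝ) * ℓ)
        = ((k : ℝ) + 1) / n := by
      field_simp
      ring
    linarith
  refine ⟨key, ?_⟩
  have hsum : ∑ v, p v < (n : ℝ) * (((k : ℝ) + 1) / n) := by
    calc ∑ v, p v < ∑ _v : V, ((k : ℝ) + 1) / n := by
          apply Finset.sum_lt_sum_of_nonempty
          · rw [← Finset.card_pos, Finset.card_univ, hV]; exact hn
          · intro v _; exact key v
      _ = (n : ℝ) * (((k : ℝ) + 1) / n) := by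
          rw [Finset.sum_const, Finset.card_univ, hV, nsmul_eq_mul]
  rw [mul_div_cancel₀ _ (ne_of_gt hnR)] at hsum
  have : (s : ℝ) < (k : ℝ) + 1 := lt_of_le_of_lt hs hsum
  exact_mod_cast Nat.lt_succ_iff.mp (by exact_mod_cast this)
end

section
/- Any randomized committee rule that (a) outputs committees of size at most k, and (b) satisfies justified representation ex post, must have continuity (maximum change in a candidate's selection probability under adding a single approval) at least k²/(n(k+1)) ≥ Ω(k/n). Concretely: on the instance with k+1 candidates each approved by n/k − n/k² voters, some candidate c* has Pr[c* selected] ≤ k/(k+1); after adding n/k² approvals for c* (making it approved by exactly n/k voters, each approving only c*), JR forces Pr[c* selected] = 1; hence some single approval change shifts c*'s probability by at least (1/(k+1))/(n/k²) = k²/(n(k+1)). -/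
/-!
Take the profile in which each of the `k + 1` candidates is the sole approval of
`(k - 1) q` voters and the remaining `q = n / k²` voters approve nobody. Since at most `k`
seats are filled in expectation, some candidate `c` is selected with probability at most
`k / (k + 1)`. Letting the `q` abstainers approve `c` one at a time gives `c` exactly
`k q = n / k` single-minded supporters, so JR forces probability `1`; the gap `1 / (k + 1)`
is covered in `q` single-approval steps, one of which moves it by at least `k² / (n (k + 1))`.
-/

open Finset

section Profiles

variable {V C : Type*} [DecidableEq V] [DecidableEq C]

def AddsOneApproval (A A' : V → Finset C) (v : V) : Prop :=
  (∀ w, w ≠ v → A' w = A w) ∧ ∃ d, d ∉ A v ∧ A' v = insert d (A v)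

def addApproval (A : V → Finset C) (T : Finset V) (c : C) : V → Finset C :=
  fun v => if v ∈ T then insert c (A v) else A v

lemma addsOneApproval_addApproval_cons {A : V → Finset C} {c : C} {a : V} {T : Finset V}
    (ha : a ∉ T) (hc : c ∉ A a) :
    AddsOneApproval (addApproval A T c) (addApproval A (T.cons a ha) c) a := by
  refine ⟨fun w hw => by simp [addApproval, hw], c, by simpa [addApproval, ha], ?_⟩
  simp [addApproval, ha]

lemma addsOneApproval_addApproval_singleton {A : V → Finset C} {c : C} {a : V}
    (hc : c ∉ A a) : AddsOneApproval A (addApproval A {a} c) a := by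
  have h := addsOneApproval_addApproval_cons (T := ∅) (notMem_empty a) hc
  rwa [show addApproval A ∅ c = A from funext fun v => if_neg (notMem_empty v)] at h

lemma abs_sub_lt_card_mul_of_addsOneApproval (f : (V → Finset C) → C → ℝ) (c : C) {δ : ℝ}
    (hstep : ∀ A A' v, AddsOneApproval A A' v → |f A' c - f A c| < δ)
    (A : V → Finset C) {T : Finset V} (hT : T.Nonempty) (hc : ∀ v ∈ T, c ∉ A v) :
    |f (addApproval A T c) c - f A c| < #T * δ := by
  induction hT using Finset.Nonempty.cons_induction with
  | singleton a =>
    simpa using hstep _ _ _ (addsOneApproval_addApproval_singleton (hc a (mem_singleton_self a)))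
  | cons a T ha hT ih =>
    have hstep_a := hstep _ _ _ (addsOneApproval_addApproval_cons ha (hc a (mem_cons_self a T)))
    have ih := ih fun v hv => hc v (mem_cons_of_mem hv)
    rw [card_cons, Nat.cast_succ]
    calc |f (addApproval A (T.cons a ha) c) c - f A c|
        ≤ |f (addApproval A (T.cons a ha) c) c - f (addApproval A T c) c|
          + |f (addApproval A T c) c - f A c| := abs_sub_le _ _ _
      _ < (#T + 1) * δ := by linarith

lemma card_add_card_le_card_addApproval_eq_singleton [Fintype V] (A : V → Finset C) {N : Finset V}
    (hN : ∀ v ∈ N, A v = ∅) (c : C) :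
    #N + #{v | A v = {c}} ≤ #{v | addApproval A N c v = {c}} := by
  have hdisj : Disjoint N ({v | A v = {c}} : Finset V) := by
    refine disjoint_left.2 fun v hvN hv => ?_
    simp [hN v hvN] at hv
  rw [← card_union_of_disjoint hdisj]
  refine card_le_card fun v hv => mem_filter.2 ⟨mem_univ v, ?_⟩
  rcases mem_union.1 hv with hvN | hv
  · simp [addApproval, hvN, hN v hvN]
  · have hvN : v ∉ N := fun hvN => disjoint_left.1 hdisj hvN hv
    simpa [addApproval, hvN] using hv

end Profiles

lemma exists_profile_singletons_and_abstainers {V C : Type*} [Fintype V] [Fintype C] [DecidableEq C]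
    (s q : ℕ) (hV : Fintype.card V = Fintype.card C * s + q) :
    ∃ (A : V → Finset C) (N : Finset V),
      #N = q ∧ (∀ v ∈ N, A v = ∅) ∧ ∀ c, s ≤ #{v | A v = {c}} := by
  let e : V ≃ (C × Fin s) ⊕ Fin q := Fintype.equivOfCardEq (by simp [hV])
  refine ⟨fun v => Sum.elim (fun p => {p.1}) (fun _ => ∅) (e v),
    univ.map (Function.Embedding.inr.trans e.symm.toEmbedding), by simp, ?_, fun c => ?_⟩
  · simp
  · calc s = #(univ.map (((Function.Embedding.sectR c (Fin s)).trans
            Function.Embedding.inl).trans e.symm.toEmbedding)) := by simp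
      _ ≤ _ := card_le_card fun v => by aesop

lemma exists_le_div_of_sum_le {C : Type*} [Fintype C] {k : ℕ} (g : C → ℝ)
    (hC : Fintype.card C = k + 1) (hg : ∑ c, g c ≤ k) : ∃ c, g c ≤ k / (k + 1) := by
  have : Nonempty C := Fintype.card_pos_iff.1 (by omega)
  obtain ⟨c, -, hc⟩ :=
    exists_le_of_sum_le (f := g) (g := fun _ => (k : ℝ) / (k + 1)) univ_nonempty
      (by simpa [hC, mul_div_cancel₀ _ (by positivity : (k : ℝ) + 1 ≠ 0)] using hg)
  exact ⟨c, hc⟩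

theorem stmt_9_general (n k : ℕ) (hk : 0 < k) (hn : 0 < n) (hdvd : k ^ 2 ∣ n)
    {C : Type*} [Fintype C] [DecidableEq C] (hC : Fintype.card C = k + 1)
    {V : Type*} [Fintype V] [DecidableEq V] (hV : Fintype.card V = n)
    (f : (V → Finset C) → C → ℝ)
    (hfk : ∀ A, ∑ c, f A c ≤ (k : ℝ))
    (hJR : ∀ (A : V → Finset C) (c : C),
      n / k ≤ (Finset.univ.filter (fun v => A v = {c})).card → f A c = 1) :
    ∃ (A A' : V → Finset C) (v : V) (c : C),
      (∀ w, w ≠ v → A' w = A w) ∧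
      (∃ d, d ∉ A v ∧ A' v = insert d (A v)) ∧
      (k : ℝ) ^ 2 / (n * (k + 1)) ≤ |f A' c - f A c| := by
  obtain ⟨q, rfl⟩ := hdvd
  have hq : 0 < q := Nat.pos_of_mul_pos_left hn
  obtain ⟨A, N, hNcard, hNempty, hsingle⟩ :=
    exists_profile_singletons_and_abstainers (V := V) (C := C) ((k - 1) * q) q (by
      obtain ⟨j, rfl⟩ := Nat.exists_eq_add_of_lt hk
      rw [hV, hC]; simp only [zero_add, Nat.add_sub_cancel]; ring)
  obtain ⟨c, hc⟩ := exists_le_div_of_sum_le (f A) hC (hfk A)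
  have hfc : f (addApproval A N c) c = 1 := by
    refine hJR _ _ (le_trans ?_ (card_add_card_le_card_addApproval_eq_singleton A hNempty c))
    rw [show k ^ 2 * q = k * q * k by ring, Nat.mul_div_cancel _ hk, hNcard]
    have hcount := hsingle c
    rw [Nat.sub_one_mul] at hcount
    have := Nat.le_mul_of_pos_left q hk
    omega
  by_contra! hsteps
  have hgap := abs_sub_lt_card_mul_of_addsOneApproval f c
    (fun A A' v h => hsteps A A' v c h.1 h.2) A (T := N) (card_pos.1 (hNcard ▸ hq))
    (fun v hv => by simp [hNempty v hv])
  have hqδ : (#N : ℝ) * ((k : ℝ) ^ 2 / ((k ^ 2 * q : ℕ) * (k + 1))) = 1 / (k + 1) := by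
    rw [hNcard]; push_cast; field_simp
  rw [hfc, hqδ] at hgap
  have hk1 : (k : ℝ) / (k + 1) = 1 - 1 / (k + 1) := by field_simp; ring
  linarith [le_abs_self (1 - f A c)]

/-- Continuity lower bound for JR rules: any randomized committee rule `f`
(given by its selection probabilities) which outputs committees of size at
most `k` (so `∑ c, f A c ≤ k`) and which satisfies justified representation
ex post (here instantiated: whenever at least `n/k` voters approve exactly
the single candidate `c`, we must have `f A c = 1`), admits two approval
profiles differing by a single approval of a single voter on which some
candidate's selection probability changes by at least `k²/(n(k+1))`. -/
theorem stmt_9 (n k : ℕ) (hk : 0 < k) (hn : 0 < n) (hdvd : k ^ 2 ∣ n)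
    {C : Type*} [Fintype C] [DecidableEq C] (hC : Fintype.card C = k + 1)
    {V : Type*} [Fintype V] [DecidableEq V] (hV : Fintype.card V = n)
    (f : (V → Finset C) → C → ℝ)
    (hf0 : ∀ A c, 0 ≤ f A c) (hf1 : ∀ A c, f A c ≤ 1)
    (hfk : ∀ A, ∑ c, f A c ≤ (k : ℝ))
    (hJR : ∀ (A : V → Finset C) (c : C),
      n / k ≤ (Finset.univ.filter (fun v => A v = {c})).card → f A c = 1) :
    ∃ (A A' : V → Finset C) (v : V) (c : C),
      (∀ w, w ≠ v → A' w = A w) ∧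
      (∃ d, d ∉ A v ∧ A' v = insert d (A v)) ∧
      (k : ℝ) ^ 2 / (n * (k + 1)) ≤ |f A' c - f A c| :=
  stmt_9_general n k hk hn hdvd hC hV f hfk hJR
end
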